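/- Let T₁, T₂ be random variables with joint density p(t₁, t₂) = 𝟙{0 ≤ t₂ ≤ t₁}·t_{n-1}(t₁)·q(t₂), where t_{n-1} is the density of the Student t-distribution with n-1 degrees of freedom and q is a nonnegative integrable function. Then T := (1 - F_{n-1}(T₁))/(1 - F_{n-1}(T₂)) is uniformly distributed on [0,1], where F_{n-1} is the Student t cumulative distribution function with n-1 degrees of freedom. -/

import Mathlib

open MeasureTheory Real Set
open scoped ENNReal

/-- Density of the Student t-distribution with `ν` degrees of freedom. -/
noncomputable def studentDens (ν x : ℝ) : ℝ :=
  Real.Gamma ((ν + 1) / 2) / (Real.sqrt (ν * Real.pi) * Real.Gamma (ν / 2)) *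
    (1 + x ^ 2 / ν) ^ (-(ν + 1) / 2)

/-- CDF of the Student t-distribution with `ν` degrees of freedom. -/
noncomputable def studentCDF (ν x : ℝ) : ℝ := ∫ t in Set.Iic x, studentDens ν t

/-! With `S c = ∫_{(c,∞)} t_ν`, we have `1 - F_ν = S` since `t_ν` integrates to one (a beta
integral, after substituting `y = √(1/u - 1)`), and `S` is continuous and strictly decreasing
to `0`. Given `T₂ = t₂ ≥ 0`, the event `S(T₁)/S(t₂) ≤ a` together with `T₁ ≥ t₂` is the event
`S(T₁) ≤ min(a,1)·S(t₂)`, i.e. `T₁ ≥ c` for the `c` with `S c = min(a,1)·S(t₂)`, of `t_ν`-mass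
`min(a,1)·S(t₂)`. Integrating over `t₂` gives `P(T ≤ a) = min(a,1)·M` with `M` independent of
`a`, and letting `a → ∞` shows `M = 1`. -/

open Filter Topology

lemma integral_rpow_mul_one_sub_rpow {u v : ℝ} (hu : 0 < u) (hv : 0 < v) :
    ∫ x in (0:ℝ)..1, x ^ (u - 1) * (1 - x) ^ (v - 1) =
      Real.Gamma u * Real.Gamma v / Real.Gamma (u + v) := by
  have hbeta : Complex.betaIntegral u v
      = ((∫ x in (0:ℝ)..1, x ^ (u - 1) * (1 - x) ^ (v - 1) : ℝ) : ℂ) := by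
    rw [Complex.betaIntegral, ← intervalIntegral.integral_ofReal]
    refine intervalIntegral.integral_congr fun x hx => ?_
    rw [uIcc_of_le zero_le_one] at hx
    rw [Complex.ofReal_mul, Complex.ofReal_cpow hx.1, Complex.ofReal_cpow (sub_nonneg.mpr hx.2)]
    push_cast
    rfl
  have h := Complex.betaIntegral_eq_Gamma_mul_div u v (by simpa using hu) (by simpa using hv)
  rw [hbeta, ← Complex.ofReal_add, Complex.Gamma_ofReal, Complex.Gamma_ofReal,
    Complex.Gamma_ofReal] at h
  exact_mod_cast h

lemma integral_Ioi_one_add_sq_rpow_neg (p : ℝ) :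
    ∫ y in Ioi (0:ℝ), (1 + y ^ 2) ^ (-p) =
      2⁻¹ * ∫ u in (0:ℝ)..1, u ^ (p - 1/2 - 1) * (1 - u) ^ ((1:ℝ)/2 - 1) := by
  set φ : ℝ → ℝ := fun u => √(u⁻¹ - 1)
  set φ' : ℝ → ℝ := fun u => 1 / (2 * √(u⁻¹ - 1)) * -(u ^ 2)⁻¹
  have hw : ∀ u ∈ Ioo (0:ℝ) 1, 0 < u⁻¹ - 1 := fun u hu =>
    sub_pos.mpr ((one_lt_inv₀ hu.1).mpr hu.2)
  have himage : φ '' Ioo 0 1 = Ioi 0 := by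
    refine Subset.antisymm (image_subset_iff.mpr fun u hu => sqrt_pos.mpr (hw u hu)) ?_
    intro y (hy : 0 < y)
    refine ⟨(1 + y ^ 2)⁻¹, ⟨by positivity, inv_lt_one_of_one_lt₀ (by nlinarith)⟩, ?_⟩
    simp only [φ, inv_inv, add_sub_cancel_left, sqrt_sq hy.le]
  have hderiv : ∀ u ∈ Ioo (0:ℝ) 1, HasDerivWithinAt φ (φ' u) (Ioo 0 1) u := fun u hu =>
    ((hasDerivAt_sqrt (hw u hu).ne').comp u
      ((hasDerivAt_inv hu.1.ne').sub_const 1)).hasDerivWithinAt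
  have hinj : InjOn φ (Ioo 0 1) := fun a ha b hb hab =>
    inv_injective (sub_left_injective ((sqrt_inj (hw a ha).le (hw b hb).le).mp hab))
  have hpt : ∀ u ∈ Ioo (0:ℝ) 1, |φ' u| • (1 + φ u ^ 2) ^ (-p)
      = 2⁻¹ * (u ^ (p - 1/2 - 1) * (1 - u) ^ ((1:ℝ)/2 - 1)) := by
    intro u ⟨hu0, hu1⟩
    have h1u : 0 < 1 - u := sub_pos.mpr hu1
    have hsqrt : √(u⁻¹ - 1) = (1 - u) ^ ((1:ℝ)/2) / u ^ ((1:ℝ)/2) := by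
      rw [← sqrt_eq_rpow, ← sqrt_eq_rpow, ← sqrt_div h1u.le]
      congr 1
      field_simp
    have hu12 : (u ^ ((1:ℝ)/2)) ^ 2 = u := by rw [← sqrt_eq_rpow, sq_sqrt hu0.le]
    have h1u12 : ((1 - u) ^ ((1:ℝ)/2)) ^ 2 = 1 - u := by rw [← sqrt_eq_rpow, sq_sqrt h1u.le]
    have hone : 1 + φ u ^ 2 = u⁻¹ := by
      simp only [φ, sq_sqrt (hw u ⟨hu0, hu1⟩).le, add_sub_cancel]
    rw [smul_eq_mul, hone, inv_rpow hu0.le, ← rpow_neg hu0.le, neg_neg, abs_mul, abs_neg,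
      abs_of_pos (by positivity : (0:ℝ) < (u ^ 2)⁻¹),
      abs_of_pos (one_div_pos.mpr (mul_pos two_pos (sqrt_pos.mpr (hw u ⟨hu0, hu1⟩)))), hsqrt,
      rpow_sub hu0, rpow_sub hu0, rpow_sub h1u, rpow_one, rpow_one]
    field_simp
    ring_nf
    rw [hu12, h1u12]
    ring
  rw [← himage, integral_image_eq_integral_abs_deriv_smul measurableSet_Ioo hderiv hinj,
    setIntegral_congr_fun measurableSet_Ioo hpt, integral_const_mul,
    intervalIntegral.integral_of_le zero_le_one, integral_Ioc_eq_integral_Ioo]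

lemma integral_one_add_sq_rpow_neg {p : ℝ} (hp : 1/2 < p) :
    ∫ y : ℝ, (1 + y ^ 2) ^ (-p) = √π * Real.Gamma (p - 1/2) / Real.Gamma p := by
  have heven : ∫ y : ℝ, (1 + y ^ 2) ^ (-p) = 2 * ∫ y in Ioi (0:ℝ), (1 + y ^ 2) ^ (-p) := by
    rw [← integral_comp_abs (f := fun y : ℝ => (1 + y ^ 2) ^ (-p))]
    simp only [sq_abs]
  rw [heven, integral_Ioi_one_add_sq_rpow_neg, integral_rpow_mul_one_sub_rpow (by linarith)
    (by norm_num), Gamma_one_half_eq, sub_add_cancel]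
  ring

lemma integrable_one_add_sq_rpow_neg {p : ℝ} (hp : 1/2 < p) :
    Integrable fun y : ℝ => (1 + y ^ 2) ^ (-p) := by
  have h := integrable_rpow_neg_one_add_norm_sq (E := ℝ) (μ := volume) (r := 2 * p) (by simp; linarith)
  simp only [norm_eq_abs, sq_abs, neg_div, mul_div_cancel_left₀ p two_ne_zero] at h
  exact h

noncomputable def survival (f : ℝ → ℝ) (c : ℝ) : ℝ := ∫ x in Ioi c, f x

section Survival

variable {f : ℝ → ℝ}

lemma survival_sub_survival (hf : Integrable f) (a b : ℝ) :
    survival f a - survival f b = ∫ x in a..b, f x :=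
  intervalIntegral.integral_Ioi_sub_Ioi' hf.integrableOn hf.integrableOn

lemma continuous_survival (hf : Integrable f) : Continuous (survival f) := by
  refine ((continuous_const (y := survival f 0)).sub
    (intervalIntegral.continuous_primitive (fun _ _ => hf.intervalIntegrable) 0)).congr
    fun c => ?_
  simp only [Pi.sub_apply, ← survival_sub_survival hf, sub_sub_cancel]

lemma tendsto_survival_atTop : Tendsto (survival f) atTop (𝓝 0) :=
  tendsto_integral_Ioi_zero tendsto_id

variable (hf : Integrable f) (hpos : ∀ x, 0 < f x)
include hf hpos

lemma survival_strictAnti : StrictAnti (survival f) := fun a b hab => by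
  rw [← sub_pos, survival_sub_survival hf]
  exact intervalIntegral.intervalIntegral_pos_of_pos hf.intervalIntegrable hpos hab

lemma survival_pos (c : ℝ) : 0 < survival f c :=
  (setIntegral_nonneg measurableSet_Ioi fun x _ => (hpos x).le).trans_lt
    (survival_strictAnti hf hpos (lt_add_one c))

lemma lintegral_Ici_eq_ofReal_survival (c : ℝ) :
    ∫⁻ x in Ici c, ENNReal.ofReal (f x) = ENNReal.ofReal (survival f c) := by
  rw [setLIntegral_congr Ioi_ae_eq_Ici.symm, survival,
    ofReal_integral_eq_lintegral_ofReal hf.integrableOn (ae_of_all _ fun x => (hpos x).le)]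

lemma setLIntegral_survival_le {y t₀ : ℝ} (hy : y ≤ survival f t₀) :
    ∫⁻ t in {t | survival f t ≤ y}, ENNReal.ofReal (f t) = ENNReal.ofReal y := by
  rcases le_or_gt y 0 with hy0 | hy0
  · have hempty : {t | survival f t ≤ y} = ∅ :=
      eq_empty_of_forall_notMem fun t ht => (hy0.trans_lt (survival_pos hf hpos t)).not_ge ht
    rw [hempty, Measure.restrict_empty, lintegral_zero_measure, ENNReal.ofReal_of_nonpos hy0]
  obtain ⟨b, hb, htb⟩ :=
    ((tendsto_survival_atTop.eventually_lt_const hy0).and (eventually_ge_atTop t₀)).exists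
  obtain ⟨c, -, hc⟩ :=
    intermediate_value_Icc' htb (continuous_survival hf).continuousOn ⟨hb.le, hy⟩
  have hset : {t | survival f t ≤ y} = Ici c := by
    ext t
    rw [mem_ofPred_eq, ← hc, (survival_strictAnti hf hpos).le_iff_ge, mem_Ici]
  rw [hset, lintegral_Ici_eq_ofReal_survival hf hpos, hc]

end Survival

lemma measurable_survival_ratio {f : ℝ → ℝ} (hf : Integrable f) :
    Measurable fun z : ℝ × ℝ => survival f z.1 / survival f z.2 :=
  ((continuous_survival hf).measurable.comp measurable_fst).div
    ((continuous_survival hf).measurable.comp measurable_snd)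

lemma eq_restrict_Icc_of_measure_Iic {μ : Measure ℝ} [IsProbabilityMeasure μ] {M : ℝ≥0∞}
    (h : ∀ a, μ (Iic a) = ENNReal.ofReal (min a 1) * M) : μ = volume.restrict (Icc 0 1) := by
  have hM : M = 1 := by
    have hlim : Tendsto (fun a => μ (Iic a)) atTop (𝓝 M) :=
      tendsto_const_nhds.congr' <| (eventually_ge_atTop 1).mono fun a ha => by
        dsimp only; rw [h, min_eq_right ha, ENNReal.ofReal_one, one_mul]
    simpa using tendsto_nhds_unique hlim (tendsto_measure_Iic_atTop μ)
  refine Measure.ext_of_Iic _ _ fun a => ?_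
  have hset : Iic a ∩ Icc 0 1 = Icc 0 (min a 1) := by
    ext x; simp only [mem_inter_iff, mem_Iic, mem_Icc, le_min_iff]; tauto
  rw [h, hM, mul_one, Measure.restrict_apply measurableSet_Iic, hset, Real.volume_Icc, sub_zero]

noncomputable def spacingMeasure (f q : ℝ → ℝ) : Measure (ℝ × ℝ) :=
  volume.withDensity fun z => ENNReal.ofReal
    (Set.indicator {z : ℝ × ℝ | 0 ≤ z.2 ∧ z.2 ≤ z.1} (fun z => f z.1 * q z.2) z)

lemma ratio_le_inter_region_eq {S : ℝ → ℝ} (hS : StrictAnti S) (hpos : ∀ x, 0 < S x) (a : ℝ) :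
    {z : ℝ × ℝ | S z.1 / S z.2 ≤ a} ∩ {z | 0 ≤ z.2 ∧ z.2 ≤ z.1} =
      {z | 0 ≤ z.2 ∧ S z.1 ≤ min a 1 * S z.2} := by
  ext z
  simp only [mem_inter_iff, mem_ofPred_eq, div_le_iff₀ (hpos z.2),
    min_mul_of_nonneg _ _ (hpos z.2).le, le_min_iff, one_mul, hS.le_iff_ge]
  tauto

lemma spacingMeasure_survival_ratio_le_eq_lintegral {f q : ℝ → ℝ} (hf : Integrable f)
    (hpos : ∀ x, 0 < f x) (a : ℝ) :
    spacingMeasure f q {z | survival f z.1 / survival f z.2 ≤ a} =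
      ∫⁻ z, {z : ℝ × ℝ | 0 ≤ z.2 ∧ survival f z.1 ≤ min a 1 * survival f z.2}.indicator
        (fun z => ENNReal.ofReal (f z.1) * ENNReal.ofReal (q z.2)) z := by
  have hA : MeasurableSet {z : ℝ × ℝ | survival f z.1 / survival f z.2 ≤ a} :=
    measurable_survival_ratio hf measurableSet_Iic
  rw [spacingMeasure, withDensity_apply _ hA, ← lintegral_indicator hA,
    ← ratio_le_inter_region_eq (survival_strictAnti hf hpos) (survival_pos hf hpos) a]
  refine lintegral_congr fun z => ?_
  rw [← indicator_indicator]
  simp only [indicator_apply]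
  split_ifs <;> simp [ENNReal.ofReal_mul (hpos z.1).le]

lemma spacingMeasure_survival_ratio_le {f q : ℝ → ℝ} (hf : Integrable f) (hpos : ∀ x, 0 < f x)
    (hq : AEMeasurable q) (a : ℝ) :
    spacingMeasure f q {z | survival f z.1 / survival f z.2 ≤ a} =
      ENNReal.ofReal (min a 1) *
        ∫⁻ t in Ici 0, ENNReal.ofReal (q t) * ENNReal.ofReal (survival f t) := by
  set S := survival f
  set b := min a 1
  have hSm : Measurable S := (continuous_survival hf).measurable
  set B := {z : ℝ × ℝ | 0 ≤ z.2 ∧ S z.1 ≤ b * S z.2}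
  set h : ℝ × ℝ → ℝ≥0∞ := fun z => ENNReal.ofReal (f z.1) * ENNReal.ofReal (q z.2)
  have hB : MeasurableSet B := (measurableSet_le measurable_const measurable_snd).inter
    (measurableSet_le (hSm.comp measurable_fst) (measurable_const.mul (hSm.comp measurable_snd)))
  have hinner : ∀ t₂, ∫⁻ t₁, B.indicator h (t₁, t₂) =
      (Ici 0).indicator (fun t => ENNReal.ofReal (q t) * ENNReal.ofReal (b * S t)) t₂ := by
    intro t₂
    by_cases ht₂ : 0 ≤ t₂
    · have hsec : ∀ t₁, B.indicator h (t₁, t₂) = ENNReal.ofReal (q t₂) *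
          {t | S t ≤ b * S t₂}.indicator (fun t => ENNReal.ofReal (f t)) t₁ := fun t₁ => by
        simp [B, h, indicator, ht₂, mul_comm]
      rw [lintegral_congr hsec, lintegral_const_mul' _ _ ENNReal.ofReal_ne_top,
        lintegral_indicator (measurableSet_le hSm measurable_const),
        setLIntegral_survival_le hf hpos
          (mul_le_of_le_one_left (survival_pos hf hpos t₂).le (min_le_right a 1)),
        indicator_of_mem (mem_Ici.mpr ht₂)]
    · simp [B, indicator, ht₂]
  have hmeas : AEMeasurable (B.indicator h) (volume.prod volume) :=
    ((hf.aemeasurable.comp_fst.ennreal_ofReal).mul hq.comp_snd.ennreal_ofReal).indicator hB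
  rw [spacingMeasure_survival_ratio_le_eq_lintegral hf hpos, Measure.volume_eq_prod,
    lintegral_prod_symm _ hmeas, lintegral_congr hinner, lintegral_indicator measurableSet_Ici,
    ← lintegral_const_mul' _ _ ENNReal.ofReal_ne_top]
  refine setLIntegral_congr_fun measurableSet_Ici fun t _ => ?_
  rw [ENNReal.ofReal_mul' (survival_pos hf hpos t).le]
  ring

section Student

variable {ν : ℝ} (hν : 0 < ν)
include hν

lemma studentDens_eq (x : ℝ) :
    studentDens ν x = Real.Gamma ((ν + 1) / 2) / (√(ν * π) * Real.Gamma (ν / 2)) *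
      (1 + (x / √ν) ^ 2) ^ (-((ν + 1) / 2)) := by
  rw [studentDens, div_pow, sq_sqrt hν.le, neg_div]

lemma studentDens_pos (x : ℝ) : 0 < studentDens ν x := by
  have := Real.Gamma_pos_of_pos (half_pos (by linarith : 0 < ν + 1))
  have := Real.Gamma_pos_of_pos (half_pos hν)
  rw [studentDens_eq hν]
  positivity

lemma integrable_studentDens : Integrable (studentDens ν) := by
  rw [funext (studentDens_eq hν)]
  exact ((integrable_one_add_sq_rpow_neg (by linarith)).comp_div
    (sqrt_pos.mpr hν).ne').const_mul _

lemma integral_studentDens : ∫ x, studentDens ν x = 1 := by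
  have := Real.Gamma_pos_of_pos (half_pos hν)
  have := Real.Gamma_pos_of_pos (half_pos (by linarith : 0 < ν + 1))
  rw [funext (studentDens_eq hν), integral_const_mul,
    Measure.integral_comp_div (fun y => (1 + y ^ 2) ^ (-((ν + 1) / 2))),
    integral_one_add_sq_rpow_neg (by linarith), abs_of_pos (sqrt_pos.mpr hν), smul_eq_mul,
    show (ν + 1) / 2 - 1 / 2 = ν / 2 by ring, sqrt_mul hν.le]
  field_simp

lemma one_sub_studentCDF (c : ℝ) : 1 - studentCDF ν c = survival (studentDens ν) c := by
  have hf := integrable_studentDens hν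
  rw [← integral_studentDens hν, ← intervalIntegral.integral_Iic_add_Ioi hf.integrableOn
    hf.integrableOn, studentCDF, survival, add_sub_cancel_left]

end Student

theorem t_spacing_null_uniform_general {n : ℕ} (hn : 2 ≤ n) {Ω : Type*} [MeasurableSpace Ω]
    (P : Measure Ω) [IsProbabilityMeasure P]
    (T1 T2 : Ω → ℝ) (hmeas1 : Measurable T1) (hmeas2 : Measurable T2)
    (q : ℝ → ℝ) (hq_int : MeasureTheory.Integrable q)
    (hjoint : P.map (fun ω => (T1 ω, T2 ω)) =
      (volume : Measure (ℝ × ℝ)).withDensity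
        (fun z => ENNReal.ofReal
          (Set.indicator {z : ℝ × ℝ | 0 ≤ z.2 ∧ z.2 ≤ z.1}
            (fun z => studentDens ((n : ℝ) - 1) z.1 * q z.2) z))) :
    P.map (fun ω => (1 - studentCDF ((n : ℝ) - 1) (T1 ω)) / (1 - studentCDF ((n : ℝ) - 1) (T2 ω)))
      = (volume : Measure ℝ).restrict (Set.Icc 0 1) := by
  have hν : 0 < (n : ℝ) - 1 := by
    have : (2 : ℝ) ≤ n := by exact_mod_cast hn
    linarith
  set f := studentDens ((n : ℝ) - 1)
  have hf := integrable_studentDens hν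
  have hpair : Measurable fun ω => (T1 ω, T2 ω) := hmeas1.prodMk hmeas2
  have hratio := measurable_survival_ratio hf
  have hstat : (fun ω => (1 - studentCDF ((n : ℝ) - 1) (T1 ω)) /
      (1 - studentCDF ((n : ℝ) - 1) (T2 ω))) =
      (fun z : ℝ × ℝ => survival f z.1 / survival f z.2) ∘ fun ω => (T1 ω, T2 ω) := by
    simp only [one_sub_studentCDF hν]
    rfl
  replace hjoint : P.map (fun ω => (T1 ω, T2 ω)) = spacingMeasure f q := hjoint
  have : IsProbabilityMeasure (spacingMeasure f q) :=
    hjoint ▸ Measure.isProbabilityMeasure_map hpair.aemeasurable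
  have := Measure.isProbabilityMeasure_map (μ := spacingMeasure f q) hratio.aemeasurable
  rw [hstat, ← Measure.map_map hratio hpair, hjoint]
  exact eq_restrict_Icc_of_measure_Iic fun a => (Measure.map_apply hratio measurableSet_Iic).trans
    (spacingMeasure_survival_ratio_le hf (studentDens_pos hν) hq_int.aemeasurable a)

/-- Null distribution of the t-spacing statistic: if `(T₁, T₂)` has joint density
`𝟙{0 ≤ t₂ ≤ t₁}·t_{n-1}(t₁)·q(t₂)` with `q` nonnegative integrable, then
`T = (1 - F_{n-1}(T₁))/(1 - F_{n-1}(T₂))` is uniform on `[0,1]`. -/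
theorem t_spacing_null_uniform {n : ℕ} (hn : 2 ≤ n) {Ω : Type*} [MeasurableSpace Ω]
    (P : Measure Ω) [IsProbabilityMeasure P]
    (T1 T2 : Ω → ℝ) (hmeas1 : Measurable T1) (hmeas2 : Measurable T2)
    (q : ℝ → ℝ) (hq_nonneg : ∀ x, 0 ≤ q x) (hq_int : MeasureTheory.Integrable q)
    (hjoint : P.map (fun ω => (T1 ω, T2 ω)) =
      (volume : Measure (ℝ × ℝ)).withDensity
        (fun z => ENNReal.ofReal
          (Set.indicator {z : ℝ × ℝ | 0 ≤ z.2 ∧ z.2 ≤ z.1}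
            (fun z => studentDens ((n : ℝ) - 1) z.1 * q z.2) z))) :
    P.map (fun ω => (1 - studentCDF ((n : ℝ) - 1) (T1 ω)) / (1 - studentCDF ((n : ℝ) - 1) (T2 ω)))
      = (volume : Measure ℝ).restrict (Set.Icc 0 1) :=
  t_spacing_null_uniform_general hn P T1 T2 hmeas1 hmeas2 q hq_int hjoint
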